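/- arXiv:2211.12295 — 2 statements merged into one kernel-verified Lean document; each statement's English description precedes it below -/
import Mathlib

section
/- Let p > 1, a = 0 and b ≥ −p. Assume (f,g) ∈ C²(ℝ)×C¹(ℝ) with supp f, supp g ⊂ {x : |x| ≤ R}, R ≥ 1, and ∫_ℝ g(x)dx > 0. Then there exist constants ε₂ = ε₂(g,p,a,b,R) > 0 and C > 0 independent of ε such that for every 0 < ε ≤ ε₂ and every T ≥ exp(C ε^{−(p−1)}), there is no continuous solution U ∈ C(ℝ×[0,T]) with supp U ⊂ {(x,t) : |x| ≤ t+R} of the integral equation U = ε u_t⁰ + L'_{a,b}(|U|^p). -/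
open MeasureTheory Set
open scoped Classical

/-- Japanese bracket `⟨x⟩ = √(1+x²)`. -/
noncomputable def jb (x : ℝ) : ℝ := Real.sqrt (1 + x ^ 2)

/-- The operator `L'_{a,b}`. -/
noncomputable def Lab' (a b : ℝ) (v : ℝ → ℝ → ℝ) (x t : ℝ) : ℝ :=
    (1 / 2) * (∫ s in (0:ℝ)..t,
      v (x + t - s) s /
        (jb (s + jb (x + t - s)) ^ (1 + a) * jb (s - jb (x + t - s)) ^ (1 + b)))
  + (1 / 2) * (∫ s in (0:ℝ)..t,
      v (x - t + s) s /
        (jb (s + jb (x - t + s)) ^ (1 + a) * jb (s - jb (x - t + s)) ^ (1 + b)))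

/-- `u_t⁰(x,t) = (1/2){f'(x+t) − f'(x−t) + g(x+t) + g(x−t)}`. -/
noncomputable def ut0 (f g : ℝ → ℝ) (x t : ℝ) : ℝ :=
  (1 / 2) * (deriv f (x + t) - deriv f (x - t) + g (x + t) + g (x - t))

/-- Indicator `χ(x,t)` of the region `t − |x| > R`. -/
noncomputable def chiR (R x t : ℝ) : ℝ := if R < t - |x| then 1 else 0

/-- The weight function `w(x,t)`. -/
noncomputable def wgt (a R x t : ℝ) : ℝ :=
  if 0 < a then chiR R x t * (1 + t - |x|) ^ (1 + a) + (1 - chiR R x t)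
  else if a = 0 then
    chiR R x t * (1 + t - |x|) + (1 - chiR R x t) / Real.log (t + |x| + R)
  else if -1 ≤ a then
    chiR R x t * (1 + t - |x|) ^ (1 + a) + (1 - chiR R x t) * (t + |x| + R) ^ a
  else chiR R x t * (1 + t + |x|) ^ (1 + a) + (1 - chiR R x t) * (t + |x| + R) ^ a

/-- The weighted sup-norm `‖U‖ = sup_{ℝ×[0,T]} |w(x,t)U(x,t)|`. -/
noncomputable def wnorm (a R T : ℝ) (U : ℝ → ℝ → ℝ) : ℝ :=
  ⨆ q : ℝ × Set.Icc (0:ℝ) T, |wgt a R q.1 (q.2 : ℝ) * U q.1 (q.2 : ℝ)|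

/-- The quantity `E_{a,b}(T)`. -/
noncomputable def Eab (p a b R T : ℝ) : ℝ :=
  if 0 < a ∧ 0 < p * (1 + a) + b then 1
  else if a = 0 ∧ -p ≤ b then Real.log (T + 3 * R) ^ p
  else if 0 < a ∧ p * (1 + a) + b = 0 then Real.log (T + 3 * R)
  else if a < 0 ∧ -p ≤ b then (T + 2 * R) ^ (-(a * p))
  else (T + 2 * R) ^ (-(p * (1 + a)) - b)

/-- The quantity `D_a(T)`. -/
noncomputable def Da (a R T : ℝ) : ℝ :=
  if 0 < a then 1
  else if a = 0 then Real.log (T + 3 * R)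
  else (T + 2 * R) ^ (-a)

/-- The five regimes of parameters `(a,b)` appearing in the lifespan estimates. -/
def Regime (p a b : ℝ) : Prop :=
  (0 < a ∧ 0 < p * (1 + a) + b) ∨ (a = 0 ∧ -p ≤ b) ∨
  (0 < a ∧ p * (1 + a) + b = 0) ∨ (a < 0 ∧ -p ≤ b) ∨
  (p * (1 + a) + b < 0 ∧ b < -p)

/-- `u` is a classical solution of the IVP
`u_tt − u_xx = |u_t|^p / (⟨t+⟨x⟩⟩^{1+a}⟨t−⟨x⟩⟩^{1+b})` on `ℝ × [0,T]`
with data `u(x,0) = εf(x)`, `u_t(x,0) = εg(x)`. -/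
def IsClassicalSol (p a b ε T : ℝ) (f g : ℝ → ℝ) (u : ℝ → ℝ → ℝ) : Prop :=
  ContDiffOn ℝ 2 (fun q : ℝ × ℝ => u q.1 q.2)
    ((Set.univ : Set ℝ) ×ˢ Set.Icc (0:ℝ) T) ∧
  (∀ x t : ℝ, 0 < t → t < T →
    deriv (deriv (fun τ => u x τ)) t - deriv (deriv (fun y => u y t)) x
      = |deriv (fun τ => u x τ) t| ^ p /
          (jb (t + jb x) ^ (1 + a) * jb (t - jb x) ^ (1 + b))) ∧
  (∀ x : ℝ, u x 0 = ε * f x) ∧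
  (∀ x : ℝ, deriv (fun τ => u x τ) 0 = ε * g x)

/-- `U` is a continuous solution, supported in `{|x| ≤ t+R}`, of the integral
equation `U = ε u_t⁰ + L'_{a,b}(|U|^p)` on `ℝ × [0,T]`. -/
def IsIntSol (p a b R ε T : ℝ) (f g : ℝ → ℝ) (U : ℝ → ℝ → ℝ) : Prop :=
  ContinuousOn (fun q : ℝ × ℝ => U q.1 q.2)
    ((Set.univ : Set ℝ) ×ˢ Set.Icc (0:ℝ) T) ∧
  (∀ x t : ℝ, 0 ≤ t → t ≤ T → t + R < |x| → U x t = 0) ∧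
  (∀ x t : ℝ, 0 ≤ t → t ≤ T →
    U x t = ε * ut0 f g x t + Lab' a b (fun y s => |U y s| ^ p) x t)

/-! Pick `y` with `|y| ≤ R + 1` and `c = (g y - f' y) / 2 > 0` (possible since `∫ f' = 0` and
`∫ g > 0`). Along the outgoing characteristic `x = y + t`, for `t ≥ R + 1` the data term is the
constant `ε c`, the incoming half of `L'` is nonnegative, and for `a = 0` the kernel of the
outgoing half is at least `1 / (M (1 + s))`. So `φ t = U (y + t) t` satisfies
`φ t ≥ ε c + ∫_{R+1}^t |φ|^p / (M (1 + s))`, and comparison with `B' = B^p / (M (1 + t))`, along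
which `M B^{1-p} + (p - 1) log (1 + t)` decreases, bounds the lifespan by
`(p - 1) log (1 + T) ≲ M (ε c)^{1-p}`. -/

lemma jb_pos (x : ℝ) : 0 < jb x := Real.sqrt_pos.2 (by positivity)

lemma one_le_jb (x : ℝ) : 1 ≤ jb x :=
  Real.one_le_sqrt.2 (by nlinarith [sq_nonneg x])

lemma abs_le_jb (x : ℝ) : |x| ≤ jb x :=
  Real.abs_le_sqrt (by linarith)

lemma jb_le_one_add_abs (x : ℝ) : jb x ≤ 1 + |x| :=
  Real.sqrt_le_iff.2 ⟨by positivity, by nlinarith [abs_nonneg x, sq_abs x]⟩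

@[fun_prop]
lemma continuous_jb : Continuous jb := by
  unfold jb; fun_prop

lemma rpow_le_rpow_abs_of_one_le {x M : ℝ} (e : ℝ) (hx : 1 ≤ x) (hxM : x ≤ M) :
    x ^ e ≤ M ^ |e| := by
  rcases le_or_gt 0 e with he | he
  · calc x ^ e ≤ M ^ e := Real.rpow_le_rpow (by linarith) hxM he
      _ = M ^ |e| := by rw [abs_of_nonneg he]
  · calc x ^ e ≤ 1 := Real.rpow_le_one_of_one_le_of_nonpos hx he.le
      _ ≤ M ^ |e| := Real.one_le_rpow (hx.trans hxM) (abs_nonneg e)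

lemma jb_add_jb_le {y s : ℝ} (hs : 0 ≤ s) : jb (s + jb (y + s)) ≤ (|y| + 2) * (1 + s) := by
  have h₁ := jb_le_one_add_abs (s + jb (y + s))
  have h₂ := jb_le_one_add_abs (y + s)
  rw [abs_of_nonneg (by linarith [jb_pos (y + s)])] at h₁
  nlinarith [abs_add_le y s, abs_of_nonneg hs, abs_nonneg y]

lemma jb_sub_jb_le {y s : ℝ} (hs : 0 ≤ s) : jb (s - jb (y + s)) ≤ |y| + 2 := by
  have h₁ := jb_le_one_add_abs (s - jb (y + s))
  have h₂ := jb_le_one_add_abs (y + s)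
  have h₃ := abs_le_jb (y + s)
  have : |s - jb (y + s)| ≤ |y| + 1 := by
    rw [abs_le]
    constructor
    · nlinarith [abs_add_le y s, abs_of_nonneg hs]
    · linarith [le_abs_self (y + s), neg_abs_le y]
  linarith

lemma characteristic_weight_le (b : ℝ) {y s : ℝ} (hs : 0 ≤ s) :
    jb (s + jb (y + s)) * jb (s - jb (y + s)) ^ (1 + b)
      ≤ (|y| + 2) * (|y| + 2) ^ |1 + b| * (1 + s) := by
  calc jb (s + jb (y + s)) * jb (s - jb (y + s)) ^ (1 + b)
      ≤ ((|y| + 2) * (1 + s)) * (|y| + 2) ^ |1 + b| :=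
        mul_le_mul (jb_add_jb_le hs)
          (rpow_le_rpow_abs_of_one_le _ (one_le_jb _) (jb_sub_jb_le hs))
          (Real.rpow_nonneg (jb_pos _).le _) (by positivity)
    _ = (|y| + 2) * (|y| + 2) ^ |1 + b| * (1 + s) := by ring

lemma lifespan_bound_of_hasDerivAt {p M t₀ T : ℝ} {B B' : ℝ → ℝ} (hp : 1 < p) (hM : 0 < M)
    (ht₀ : -1 < t₀) (hT : t₀ ≤ T) (hBc : ContinuousOn B (Icc t₀ T))
    (hB : ∀ t ∈ Ioo t₀ T, HasDerivAt B (B' t) t) (hBpos : ∀ t ∈ Icc t₀ T, 0 < B t)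
    (hB' : ∀ t ∈ Ioo t₀ T, B t ^ p / (M * (1 + t)) ≤ B' t) :
    (p - 1) * (Real.log (1 + T) - Real.log (1 + t₀)) < M * B t₀ ^ (1 - p) := by
  set Θ : ℝ → ℝ := fun t => M * B t ^ (1 - p) + (p - 1) * Real.log (1 + t)
  have hΘ : AntitoneOn Θ (Icc t₀ T) := by
    refine antitoneOn_of_hasDerivWithinAt_nonpos (convex_Icc t₀ T)
      (f' := fun t => M * (B' t * (1 - p) * B t ^ (1 - p - 1)) + (p - 1) * (1 / (1 + t)))
      ?_ ?_ ?_
    · exact (continuousOn_const.mul (hBc.rpow_const fun t ht => Or.inl (hBpos t ht).ne')).add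
        (continuousOn_const.mul ((continuous_const.add continuous_id).continuousOn.log
          fun t ht => (by linarith [ht.1] : (0:ℝ) < 1 + t).ne'))
    · intro t ht
      rw [interior_Icc] at ht
      have hlog : HasDerivAt (fun t => Real.log (1 + t)) (1 / (1 + t)) t :=
        ((hasDerivAt_id' t).const_add 1).log (by linarith [ht.1])
      exact ((((hB t ht).rpow_const (Or.inl (hBpos t (Ioo_subset_Icc_self ht)).ne')).const_mul
        M).add (hlog.const_mul (p - 1))).hasDerivWithinAt
    · intro t ht
      rw [interior_Icc] at ht
      have hBt := hBpos t (Ioo_subset_Icc_self ht)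
      have h1t : 0 < 1 + t := by linarith [ht.1]
      have key : 1 / (1 + t) ≤ M * (B' t * B t ^ (-p)) := by
        have h := mul_le_mul_of_nonneg_right (hB' t ht) (Real.rpow_pos_of_pos hBt (-p)).le
        rw [div_mul_eq_mul_div, ← Real.rpow_add hBt, add_neg_cancel, Real.rpow_zero] at h
        calc 1 / (1 + t) = M * (1 / (M * (1 + t))) := by field_simp
          _ ≤ M * (B' t * B t ^ (-p)) := mul_le_mul_of_nonneg_left h hM.le
      rw [show 1 - p - 1 = -p by ring]
      linarith [mul_le_mul_of_nonneg_left key (by linarith : (0:ℝ) ≤ p - 1)]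
  have hΘT := hΘ ⟨le_rfl, hT⟩ ⟨hT, le_rfl⟩ hT
  have hBT : 0 < M * B T ^ (1 - p) := mul_pos hM (Real.rpow_pos_of_pos (hBpos T ⟨hT, le_rfl⟩) _)
  simp only [Θ] at hΘT
  linarith

lemma lifespan_bound_of_integral_ineq {p M A t₀ T : ℝ} {φ : ℝ → ℝ} (hp : 1 < p) (hM : 0 < M)
    (hA : 0 < A) (ht₀ : -1 < t₀) (hT : t₀ ≤ T) (hφ : ContinuousOn φ (Icc t₀ T))
    (hineq : ∀ t ∈ Icc t₀ T, A + ∫ s in t₀..t, |φ s| ^ p / (M * (1 + s)) ≤ φ t) :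
    (p - 1) * (Real.log (1 + T) - Real.log (1 + t₀)) < M * A ^ (1 - p) := by
  set F : ℝ → ℝ := fun s => |φ s| ^ p / (M * (1 + s))
  have hFc : ContinuousOn F (Icc t₀ T) :=
    (hφ.abs.rpow_const fun _ _ => Or.inr (by linarith)).div (by fun_prop)
      fun s hs => (mul_pos hM (by linarith [hs.1])).ne'
  set B : ℝ → ℝ := fun t => A + ∫ s in t₀..t, F s
  have hAB : ∀ t ∈ Icc t₀ T, A ≤ B t := fun t ht =>
    le_add_of_nonneg_right <| intervalIntegral.integral_nonneg ht.1 fun s hs =>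
      div_nonneg (by positivity) (mul_pos hM (by linarith [hs.1])).le
  have hBc : ContinuousOn B (Icc t₀ T) := by
    refine continuousOn_const.add ?_
    simpa only [uIcc_of_le hT] using
      intervalIntegral.continuousOn_primitive_interval (a := t₀) (b := T)
        (by simpa only [uIcc_of_le hT] using hFc.integrableOn_Icc)
  have hB : ∀ t ∈ Ioo t₀ T, HasDerivAt B (F t) t := fun t ht =>
    (intervalIntegral.integral_hasDerivAt_right
      ((hFc.mono (Icc_subset_Icc le_rfl ht.2.le)).intervalIntegrable_of_Icc ht.1.le)
      ((hFc.mono Ioo_subset_Icc_self).stronglyMeasurableAtFilter isOpen_Ioo t ht)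
      (hFc.continuousAt (Icc_mem_nhds ht.1 ht.2))).const_add A
  have hB' : ∀ t ∈ Ioo t₀ T, B t ^ p / (M * (1 + t)) ≤ F t := by
    intro t ht
    have hBt := hA.trans_le (hAB t (Ioo_subset_Icc_self ht))
    have hBφ : B t ≤ |φ t| := (hineq t (Ioo_subset_Icc_self ht)).trans (le_abs_self _)
    have h1t : 0 < 1 + t := by linarith [ht.1]
    show _ ≤ |φ t| ^ p / (M * (1 + t))
    gcongr
  have hB₀ : B t₀ = A := by simp [B]
  simpa only [hB₀] using lifespan_bound_of_hasDerivAt hp hM ht₀ hT hBc hB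
    (fun t ht => hA.trans_le (hAB t ht)) hB'

lemma deriv_eq_zero_of_lt_abs {f : ℝ → ℝ} {R z : ℝ} (hsf : ∀ x, R < |x| → f x = 0)
    (hz : R < |z|) : deriv f z = 0 := by
  have hev : f =ᶠ[nhds z] fun _ => 0 :=
    Filter.eventuallyEq_of_mem ((isOpen_lt continuous_const continuous_abs).mem_nhds hz) hsf
  rw [hev.deriv_eq, deriv_const]

lemma exists_deriv_lt_of_integral_pos {f g : ℝ → ℝ} {R : ℝ} (hR : 0 ≤ R) (hf : ContDiff ℝ 1 f)
    (hg : Continuous g) (hsf : ∀ x, R < |x| → f x = 0) (hsg : ∀ x, R < |x| → g x = 0)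
    (hgint : 0 < ∫ x, g x) : ∃ y, |y| ≤ R + 1 ∧ deriv f y < g y := by
  by_contra! hle
  have hab : -(R + 1) ≤ R + 1 := by linarith
  have hf' : Continuous (deriv f) := hf.continuous_deriv le_rfl
  have hf_int : ∫ x in -(R + 1)..R + 1, deriv f x = 0 := by
    rw [intervalIntegral.integral_deriv_eq_sub (fun x _ => hf.differentiable one_ne_zero x)
      (hf'.intervalIntegrable _ _), hsf _ (by rw [abs_of_pos] <;> linarith),
      hsf _ (by rw [abs_neg, abs_of_pos] <;> linarith), sub_self]
  have hg_int : ∫ x in -(R + 1)..R + 1, g x = ∫ x, g x := by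
    rw [intervalIntegral.integral_of_le hab]
    refine setIntegral_eq_integral_of_forall_compl_eq_zero fun x hx => hsg x ?_
    by_contra! hxR
    exact hx ⟨by linarith [neg_abs_le x], by linarith [le_abs_self x]⟩
  have := intervalIntegral.integral_mono_on hab (hg.intervalIntegrable (μ := volume) _ _)
    (hf'.intervalIntegrable _ _) fun x hx => hle x (abs_le.2 hx)
  linarith

lemma ut0_add_self_eq {f g : ℝ → ℝ} {R y t : ℝ} (hsf : ∀ x, R < |x| → f x = 0)
    (hsg : ∀ x, R < |x| → g x = 0) (h : R < |y + t + t|) :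
    ut0 f g (y + t) t = (g y - deriv f y) / 2 := by
  rw [ut0, deriv_eq_zero_of_lt_abs hsf h, hsg _ h, add_sub_cancel_right]
  ring

lemma IsIntSol.le_along_characteristic {p a b R ε T y t : ℝ} {f g : ℝ → ℝ} {U : ℝ → ℝ → ℝ}
    (hU : IsIntSol p a b R ε T f g U) (ht : 0 ≤ t) (htT : t ≤ T) :
    ε * ut0 f g (y + t) t + 1 / 2 * ∫ s in (0:ℝ)..t, |U (y + s) s| ^ p /
        (jb (s + jb (y + s)) ^ (1 + a) * jb (s - jb (y + s)) ^ (1 + b))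
      ≤ U (y + t) t := by
  -- the incoming characteristic through `(y + t, t)` contributes a nonnegative term
  have hin : 0 ≤ ∫ s in (0:ℝ)..t, |U (y + t + t - s) s| ^ p /
      (jb (s + jb (y + t + t - s)) ^ (1 + a) * jb (s - jb (y + t + t - s)) ^ (1 + b)) :=
    intervalIntegral.integral_nonneg ht fun s _ => div_nonneg (by positivity)
      (mul_pos (Real.rpow_pos_of_pos (jb_pos _) _) (Real.rpow_pos_of_pos (jb_pos _) _)).le
  rw [hU.2.2 (y + t) t ht htT, Lab']
  simp only [add_sub_cancel_right]
  linarith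

lemma IsIntSol.continuousOn_characteristic {p a b R ε T y : ℝ} {f g : ℝ → ℝ}
    {U : ℝ → ℝ → ℝ} (hU : IsIntSol p a b R ε T f g U) :
    ContinuousOn (fun s => U (y + s) s) (Icc 0 T) :=
  hU.1.comp (by fun_prop : Continuous fun s : ℝ => (y + s, s)).continuousOn
    fun _ hs => ⟨mem_univ _, hs⟩

lemma IsIntSol.integral_ineq_along_characteristic {p b R ε T y t : ℝ} {f g : ℝ → ℝ}
    {U : ℝ → ℝ → ℝ} (hU : IsIntSol p 0 b R ε T f g U) (hp : 0 ≤ p) (hR : 0 ≤ R)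
    (hsf : ∀ x, R < |x| → f x = 0) (hsg : ∀ x, R < |x| → g x = 0) (hy : |y| ≤ R + 1)
    (ht : t ∈ Icc (R + 1) T) :
    ε * ((g y - deriv f y) / 2) + ∫ s in (R + 1)..t,
        |U (y + s) s| ^ p / (2 * ((|y| + 2) * (|y| + 2) ^ |1 + b|) * (1 + s))
      ≤ U (y + t) t := by
  obtain ⟨hRt, htT⟩ := ht
  have ht0 : 0 ≤ t := by linarith
  set C := (|y| + 2) * (|y| + 2) ^ |1 + b|
  have hC : 0 < C := by positivity
  set F : ℝ → ℝ := fun s => |U (y + s) s| ^ p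
  have hFc : ContinuousOn F (Icc 0 t) :=
    (hU.continuousOn_characteristic.mono (Icc_subset_Icc le_rfl htT)).abs.rpow_const
      fun _ _ => Or.inr hp
  have hF : ∀ s, 0 ≤ F s := fun s => by positivity
  have hW : Continuous fun s => jb (s + jb (y + s)) * jb (s - jb (y + s)) ^ (1 + b) :=
    (by fun_prop : Continuous fun s => jb (s + jb (y + s))).mul
      ((by fun_prop : Continuous fun s => jb (s - jb (y + s))).rpow_const
        fun _ => Or.inl (jb_pos _).ne')
  have hWpos : ∀ s, 0 < jb (s + jb (y + s)) * jb (s - jb (y + s)) ^ (1 + b) := fun s =>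
    mul_pos (jb_pos _) (Real.rpow_pos_of_pos (jb_pos _) _)
  have hFint : ∀ κ : ℝ, 0 < κ →
      IntervalIntegrable (fun s => F s / (κ * (1 + s))) volume 0 t := fun κ hκ =>
    ContinuousOn.intervalIntegrable_of_Icc ht0 <|
      hFc.div (by fun_prop) fun s hs => (mul_pos hκ (by linarith [hs.1])).ne'
  have hchar := hU.le_along_characteristic (y := y) ht0 htT
  rw [ut0_add_self_eq hsf hsg (by rw [abs_of_nonneg] <;> linarith [neg_abs_le y])] at hchar
  simp only [add_zero, Real.rpow_one] at hchar
  calc ε * ((g y - deriv f y) / 2) + ∫ s in (R + 1)..t, F s / (2 * C * (1 + s))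
      ≤ ε * ((g y - deriv f y) / 2) + ∫ s in (0:ℝ)..t, F s / (2 * C * (1 + s)) := by
        gcongr
        refine intervalIntegral.integral_mono_interval (by linarith) hRt le_rfl
          (ae_restrict_of_forall_mem measurableSet_Ioc fun s hs => ?_) (hFint _ (by positivity))
        exact div_nonneg (hF s) (mul_pos (by positivity) (by linarith [hs.1])).le
    _ = ε * ((g y - deriv f y) / 2) + 1 / 2 * ∫ s in (0:ℝ)..t, F s / (C * (1 + s)) := by
        rw [← intervalIntegral.integral_const_mul]
        congr 1
        refine intervalIntegral.integral_congr fun s _ => ?_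
        field_simp
    _ ≤ ε * ((g y - deriv f y) / 2) + 1 / 2 * ∫ s in (0:ℝ)..t, F s /
          (jb (s + jb (y + s)) * jb (s - jb (y + s)) ^ (1 + b)) := by
        gcongr
        refine intervalIntegral.integral_mono_on ht0 (hFint C hC)
          ((hFc.div hW.continuousOn fun s _ => (hWpos s).ne').intervalIntegrable_of_Icc ht0)
          fun s hs => ?_
        exact div_le_div_of_nonneg_left (hF s) (hWpos s) (characteristic_weight_le b hs.1)
    _ ≤ U (y + t) t := hchar

lemma mul_rpow_one_sub_le_of_exp_le {p ε L D T : ℝ} (hp : 1 < p) (hε : 0 < ε) (hε1 : ε ≤ 1)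
    (hD : 0 ≤ D) (hT : Real.exp ((L / (p - 1) + D) * ε ^ (-(p - 1))) ≤ T) :
    L * ε ^ (1 - p) ≤ (p - 1) * (Real.log T - D) := by
  set E := ε ^ (-(p - 1))
  have hE : 1 ≤ E := Real.one_le_rpow_of_pos_of_le_one_of_nonpos hε hε1 (by linarith)
  have hlog : (L / (p - 1) + D) * E ≤ Real.log T :=
    (Real.le_log_iff_exp_le ((Real.exp_pos _).trans_le hT)).2 hT
  have hexpand : (p - 1) * ((L / (p - 1) + D) * E) = L * E + (p - 1) * D * E := by
    field_simp [(sub_pos.2 hp).ne']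
  have := mul_le_mul_of_nonneg_left hlog (sub_pos.2 hp).le
  rw [show 1 - p = -(p - 1) by ring]
  linarith [mul_nonneg (mul_nonneg (sub_pos.2 hp).le hD) (sub_nonneg.2 hE)]

theorem blow_up_a_eq_zero_general (p a b R : ℝ) (f g : ℝ → ℝ)
    (hp : 1 < p) (ha : a = 0)
    (hR : 1 ≤ R) (hf : ContDiff ℝ 2 f) (hg : ContDiff ℝ 1 g)
    (hsf : ∀ x : ℝ, R < |x| → f x = 0) (hsg : ∀ x : ℝ, R < |x| → g x = 0) (hgint : 0 < ∫ x : ℝ, g x) :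
    ∃ ε₂ : ℝ, 0 < ε₂ ∧ ∃ C : ℝ, 0 < C ∧ ∀ ε : ℝ, 0 < ε → ε ≤ ε₂ →
      ∀ T : ℝ, Real.exp (C * ε ^ (-(p - 1))) ≤ T →
        ¬ ∃ U : ℝ → ℝ → ℝ, IsIntSol p a b R ε T f g U := by
  subst ha
  obtain ⟨y, hy, hfg⟩ := exists_deriv_lt_of_integral_pos (by linarith) (hf.of_le one_le_two)
    hg.continuous hsf hsg hgint
  set c := (g y - deriv f y) / 2
  set M := 2 * ((|y| + 2) * (|y| + 2) ^ |1 + b|)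
  have hc : 0 < c := by simp only [c]; linarith
  have hM : 0 < M := by positivity
  have hlogR : 0 ≤ Real.log (R + 2) := Real.log_nonneg (by linarith)
  have hp1 : 0 < p - 1 := by linarith
  refine ⟨1, one_pos, M * c ^ (1 - p) / (p - 1) + Real.log (R + 2), by positivity, ?_⟩
  rintro ε hε hε1 T hT ⟨U, hU⟩
  have hTpos : 0 < T := (Real.exp_pos _).trans_le hT
  have hbound := mul_rpow_one_sub_le_of_exp_le hp hε hε1 hlogR hT
  have hRT : R + 2 ≤ T := by
    have : 0 ≤ Real.log T - Real.log (R + 2) := (mul_nonneg_iff_of_pos_left hp1).1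
      ((mul_nonneg (by positivity) (by positivity)).trans hbound)
    rwa [sub_nonneg, Real.log_le_log_iff (by linarith) hTpos] at this
  have hlife := lifespan_bound_of_integral_ineq hp hM (mul_pos hε hc) (by linarith)
    (by linarith : R + 1 ≤ T)
    (hU.continuousOn_characteristic.mono (Icc_subset_Icc (by linarith) le_rfl))
    fun t ht => hU.integral_ineq_along_characteristic (by linarith) (by linarith) hsf hsg hy ht
  rw [Real.mul_rpow hε.le hc.le, show 1 + (R + 1) = R + 2 by ring] at hlife
  have hlogT : Real.log T ≤ Real.log (1 + T) := Real.log_le_log hTpos (by linarith)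
  linarith [mul_le_mul_of_nonneg_left hlogT hp1.le]

theorem blow_up_a_eq_zero (p a b R : ℝ) (f g : ℝ → ℝ)
    (hp : 1 < p) (ha : a = 0) (hb : -p ≤ b)
    (hR : 1 ≤ R) (hf : ContDiff ℝ 2 f) (hg : ContDiff ℝ 1 g)
    (hsf : ∀ x : ℝ, R < |x| → f x = 0) (hsg : ∀ x : ℝ, R < |x| → g x = 0) (hgint : 0 < ∫ x : ℝ, g x) :
    ∃ ε₂ : ℝ, 0 < ε₂ ∧ ∃ C : ℝ, 0 < C ∧ ∀ ε : ℝ, 0 < ε → ε ≤ ε₂ →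
      ∀ T : ℝ, Real.exp (C * ε ^ (-(p - 1))) ≤ T →
        ¬ ∃ U : ℝ → ℝ → ℝ, IsIntSol p a b R ε T f g U :=
  blow_up_a_eq_zero_general p a b R f g hp ha hR hf hg hsf hsg hgint
end

section
/- Let p > 1, R ≥ 1, T > 0, and let a, b ∈ ℝ satisfy one of the regimes: (a > 0, p(1+a)+b > 0), (a = 0, b ≥ −p), (a > 0, p(1+a)+b = 0), (a < 0, b ≥ −p), or (p(1+a)+b < 0, b < −p). Define I₊(x,t) := ∫₀ᵗ w(x+t−s, s)^{−p} χ₊(x,t;s) / ((1+s+|t−s+x|)^{1+a} (1+|s−|t−s+x||)^{1+b}) ds, where χ₊(x,t;s) = 1 if |t−s+x| ≤ s+R and 0 otherwise. Then there exists a constant C > 0, independent of T, such that for all (x,t) with 0 ≤ x ≤ t+R and 0 ≤ t ≤ T: I₊(x,t) ≤ C E_{a,b}(T) w(x,t)^{−1}. -/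
open MeasureTheory Set
open scoped Classical

/-- The integral `I₊(x,t)`. -/
noncomputable def Iplus (p a b R x t : ℝ) : ℝ :=
  ∫ s in (0:ℝ)..t,
    wgt a R (x + t - s) s ^ (-p) * (if |t - s + x| ≤ s + R then (1:ℝ) else 0) /
      ((1 + s + |t - s + x|) ^ (1 + a) * (1 + (abs (s - |t - s + x|))) ^ (1 + b))

/-!
Along the backward characteristic `s ↦ (x + t - s, s)` one has `1 + s + |x + t - s| = 1 + x + t`,
so the first factor of the integrand of `I₊` is the constant `(1 + x + t)^{-(1+a)}`. On the part
`s - |x + t - s| ≤ R`, of length at most `R`, the weight `w(x + t - s, s)` depends only on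
`x + t + R`; on the part `s - |x + t - s| > R` the substitution `u = 1 + 2s - (x + t)` leaves an
explicit power integral over `[1 + R, 1 + t - x]`. Hence `I₊ ≤ (1 + x + t)^{-(1+a)} (c K + F)`,
where `K = n^p`, `n` is the value of `w⁻¹` off the interior region at `x + t + R`, and `F` is
the power integral. Where `t - x > R` the prefactor is at most `w(x,t)⁻¹`; elsewhere
`w(x,t)⁻¹ = n` and the prefactor is at most `max 1 n`. This gives
`I₊ ≤ w⁻¹ (c (1 + K) + F)`.
Finally `1 + K` and `F` are bounded by a multiple of `E_{a,b}(T)` in each regime, using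
`x + t + R ≤ 2 (T + 2R)`, `log y ≤ y^ε / ε` and the closed forms of `∫ u^e du`.
-/

/-- The reciprocal of the weight `w` off the interior region `t - |x| > R`, as a function of
`y = t + |x| + R`. -/
noncomputable def invWgtOuter (a y : ℝ) : ℝ :=
  if 0 < a then 1 else if a = 0 then Real.log y else y ^ (-a)

theorem invWgtOuter_nonneg (a : ℝ) {y : ℝ} (hy : 1 ≤ y) : 0 ≤ invWgtOuter a y := by
  unfold invWgtOuter
  split_ifs
  · exact zero_le_one
  · exact Real.log_nonneg hy
  · exact Real.rpow_nonneg (by linarith) _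

theorem wgt_of_le {a R x t : ℝ} (hy : 0 ≤ t + |x| + R) (h : t - |x| ≤ R) :
    wgt a R x t = (invWgtOuter a (t + |x| + R))⁻¹ := by
  simp only [wgt, chiR, if_neg h.not_gt, invWgtOuter]
  split_ifs <;> simp [Real.rpow_neg hy]

theorem wgt_of_lt {a R x t : ℝ} (h : R < t - |x|) :
    wgt a R x t = (if -1 ≤ a then 1 + t - |x| else 1 + t + |x|) ^ (1 + a) := by
  simp only [wgt, chiR, if_pos h]
  split_ifs <;> simp_all
  linarith

theorem wgt_nonneg {a R x t : ℝ} (hR : 1 ≤ R) (ht : 0 ≤ t) : 0 ≤ wgt a R x t := by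
  rcases le_or_gt (t - |x|) R with h | h
  · rw [wgt_of_le (by positivity) h]
    exact inv_nonneg.2 (invWgtOuter_nonneg a (by linarith [abs_nonneg x]))
  · rw [wgt_of_lt h]
    exact Real.rpow_nonneg (by split_ifs <;> linarith [abs_nonneg x]) _

/-- The integrand of `I₊` on the part `s - |t - s + x| > R` of the backward characteristic,
after the factor `(1 + x + t)^{-(1+a)}` is taken out, in the variable `u = 1 + s - |t - s + x|`. -/
noncomputable def farDensity (p a b β u : ℝ) : ℝ :=
  (if -1 ≤ a then u else 1 + β) ^ (-(p * (1 + a))) * u ^ (-(1 + b))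

noncomputable def farPart (p a b R x t : ℝ) : ℝ :=
  ∫ u in Ioc (1 + R) (1 + (t - x)), farDensity p a b (x + t) u

noncomputable def iplusIntegrand (p a b R x t s : ℝ) : ℝ :=
  wgt a R (x + t - s) s ^ (-p) * (if |t - s + x| ≤ s + R then (1:ℝ) else 0) /
    ((1 + s + |t - s + x|) ^ (1 + a) * (1 + (abs (s - |t - s + x|))) ^ (1 + b))

noncomputable def iplusMajorant (p a b R x t s : ℝ) : ℝ :=
  (1 + (x + t)) ^ (-(1 + a)) *
    ((Icc ((x + t - R) / 2) ((x + t + R) / 2)).indicator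
        (fun _ => (1 + R) ^ |1 + b| * invWgtOuter a (x + t + R) ^ p) s +
      (Ioc ((x + t + R) / 2) t).indicator
        (fun s => farDensity p a b (x + t) (2 * s + (1 - (x + t)))) s)

theorem farDensity_nonneg (p a b : ℝ) {β u : ℝ} (hβ : 0 ≤ 1 + β) (hu : 0 ≤ u) :
    0 ≤ farDensity p a b β u := by
  unfold farDensity
  split_ifs <;> positivity

theorem iplusIntegrand_nonneg {p a b R x t s : ℝ} (hR : 1 ≤ R) (hs : 0 ≤ s) :
    0 ≤ iplusIntegrand p a b R x t s := by
  have := wgt_nonneg (a := a) (x := x + t - s) hR hs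
  unfold iplusIntegrand
  positivity

theorem iplusMajorant_nonneg {p a b R x t : ℝ} (hR : 1 ≤ R) (hx : 0 ≤ x) (ht : 0 ≤ t)
    (s : ℝ) :
    0 ≤ iplusMajorant p a b R x t s := by
  have hn := invWgtOuter_nonneg a (y := x + t + R) (by linarith)
  unfold iplusMajorant
  refine mul_nonneg (by positivity) (add_nonneg (indicator_nonneg (fun _ _ => ?_) _)
    (indicator_nonneg (fun s hs => farDensity_nonneg p a b (by linarith) ?_) _))
  · exact mul_nonneg (by positivity) (Real.rpow_nonneg hn p)
  · linarith [hs.1]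

theorem iplusIntegrand_le_of_le {p a b R x t s : ℝ} (hR : 1 ≤ R) (hx : 0 ≤ x) (ht : 0 ≤ t)
    (hst : s ≤ t) (hnear : s ≤ (x + t + R) / 2) :
    iplusIntegrand p a b R x t s ≤ (1 + (x + t)) ^ (-(1 + a)) *
      (Icc ((x + t - R) / 2) ((x + t + R) / 2)).indicator
        (fun _ => (1 + R) ^ |1 + b| * invWgtOuter a (x + t + R) ^ p) s := by
  have hX : |x + t - s| = x + t - s := abs_of_nonneg (by linarith)
  have hn := invWgtOuter_nonneg a (y := x + t + R) (by linarith)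
  have hL : 0 ≤ (1 + (x + t)) ^ (-(1 + a)) := Real.rpow_nonneg (by linarith) _
  rw [iplusIntegrand, show |t - s + x| = x + t - s by rw [← hX]; ring_nf,
    show 1 + s + (x + t - s) = 1 + (x + t) by ring]
  by_cases hsupp : x + t - s ≤ s + R
  · have hw : wgt a R (x + t - s) s ^ (-p) = invWgtOuter a (x + t + R) ^ p := by
      rw [wgt_of_le (by rw [hX]; linarith) (by rw [hX]; linarith), hX,
        show s + (x + t - s) + R = x + t + R by ring, Real.rpow_neg (inv_nonneg.2 hn),
        Real.inv_rpow hn, inv_inv]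
    have hb : (1 + |s - (x + t - s)|) ^ (-(1 + b)) ≤ (1 + R) ^ |1 + b| :=
      calc (1 + |s - (x + t - s)|) ^ (-(1 + b)) ≤ (1 + |s - (x + t - s)|) ^ |1 + b| :=
            Real.rpow_le_rpow_of_exponent_le (by linarith [abs_nonneg (s - (x + t - s))])
              (neg_le_abs _)
        _ ≤ (1 + R) ^ |1 + b| := by
            gcongr
            exact abs_le.2 ⟨by linarith, by linarith⟩
    rw [indicator_of_mem (show s ∈ Icc _ _ from ⟨by linarith, hnear⟩), hw, if_pos hsupp,
      mul_one, div_eq_mul_inv, mul_inv, ← Real.rpow_neg (by linarith),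
      ← Real.rpow_neg (by positivity)]
    calc invWgtOuter a (x + t + R) ^ p * ((1 + (x + t)) ^ (-(1 + a)) *
          (1 + |s - (x + t - s)|) ^ (-(1 + b)))
        = (1 + (x + t)) ^ (-(1 + a)) * ((1 + |s - (x + t - s)|) ^ (-(1 + b)) *
          invWgtOuter a (x + t + R) ^ p) := by ring
      _ ≤ _ := by gcongr
  · rw [if_neg hsupp, mul_zero, zero_div]
    exact mul_nonneg hL (indicator_nonneg (fun _ _ =>
      mul_nonneg (Real.rpow_nonneg (by linarith) _) (Real.rpow_nonneg hn p)) _)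

theorem iplusIntegrand_of_lt {p a b R x t s : ℝ} (hR : 0 ≤ R) (hx : 0 ≤ x) (hst : s ≤ t)
    (hfar : (x + t + R) / 2 < s) :
    iplusIntegrand p a b R x t s =
      (1 + (x + t)) ^ (-(1 + a)) * farDensity p a b (x + t) (2 * s + (1 - (x + t))) := by
  have hX : |x + t - s| = x + t - s := abs_of_nonneg (by linarith)
  have hu : 0 < 2 * s + (1 - (x + t)) := by linarith
  rw [iplusIntegrand, show |t - s + x| = x + t - s by rw [← hX]; ring_nf, if_pos (by linarith),
    wgt_of_lt (by rw [hX]; linarith), hX, abs_of_nonneg (by linarith),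
    ← Real.rpow_mul (by split_ifs <;> linarith), farDensity,
    show 1 + s + (x + t - s) = 1 + (x + t) by ring,
    show 1 + s - (x + t - s) = 2 * s + (1 - (x + t)) by ring,
    show 1 + (s - (x + t - s)) = 2 * s + (1 - (x + t)) by ring,
    show (1 + a) * -p = -(p * (1 + a)) by ring, mul_one, div_eq_mul_inv, mul_inv,
    ← Real.rpow_neg (by linarith), ← Real.rpow_neg hu.le]
  exact mul_left_comm _ _ _

theorem iplusIntegrand_le_iplusMajorant {p a b R x t s : ℝ} (hR : 1 ≤ R) (hx : 0 ≤ x)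
    (ht : 0 ≤ t) (hst : s ≤ t) :
    iplusIntegrand p a b R x t s ≤ iplusMajorant p a b R x t s := by
  rw [iplusMajorant]
  rcases le_or_gt s ((x + t + R) / 2) with hnear | hfar
  · rw [indicator_of_notMem (s := Ioc _ _) (fun h => (h.1.trans_le hnear).false), add_zero]
    exact iplusIntegrand_le_of_le hR hx ht hst hnear
  · rw [indicator_of_notMem (s := Icc _ _) (fun h => (h.2.trans_lt hfar).false),
      indicator_of_mem (show s ∈ Ioc _ _ from ⟨hfar, hst⟩), zero_add,
      iplusIntegrand_of_lt (by linarith) hx hst hfar]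

theorem setIntegral_Ioc_comp_mul_add {E : Type*} [NormedAddCommGroup E] [NormedSpace ℝ E]
    (f : ℝ → E) {c : ℝ} (hc : 0 < c) (d m t : ℝ) :
    ∫ s in Ioc m t, f (c * s + d) = c⁻¹ • ∫ u in Ioc (c * m + d) (c * t + d), f u := by
  rcases le_or_gt m t with hmt | htm
  · rw [← intervalIntegral.integral_of_le hmt, ← intervalIntegral.integral_of_le (by gcongr),
      intervalIntegral.integral_comp_mul_add f hc.ne']
  · rw [Ioc_eq_empty_of_le htm.le, Ioc_eq_empty_of_le (by gcongr), Measure.restrict_empty,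
      integral_zero_measure, integral_zero_measure, smul_zero]

theorem farPart_nonneg (p a b : ℝ) {R x t : ℝ} (hR : 1 ≤ R) (hβ : 0 ≤ x + t) :
    0 ≤ farPart p a b R x t :=
  setIntegral_nonneg measurableSet_Ioc fun u hu =>
    farDensity_nonneg p a b (by linarith) (by linarith [hu.1])

theorem integrable_indicator_farDensity (p a b : ℝ) {R x t : ℝ} (hR : 0 ≤ R) :
    Integrable ((Ioc ((x + t + R) / 2) t).indicator
      fun s => farDensity p a b (x + t) (2 * s + (1 - (x + t)))) := by
  refine ((ContinuousOn.integrableOn_Icc ?_).mono_set Ioc_subset_Icc_self).integrable_indicator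
    measurableSet_Ioc
  have hu : ∀ s ∈ Icc ((x + t + R) / 2) t, 2 * s + (1 - (x + t)) ≠ 0 := fun s hs => by
    linarith [hs.1]
  have hlin : ContinuousOn (fun s : ℝ => 2 * s + (1 - (x + t))) (Icc ((x + t + R) / 2) t) := by
    fun_prop
  have hpow (r : ℝ) : ContinuousOn (fun s => (2 * s + (1 - (x + t))) ^ r)
      (Icc ((x + t + R) / 2) t) := hlin.rpow_const fun s hs => Or.inl (hu s hs)
  unfold farDensity
  split_ifs
  · exact (hpow _).mul (hpow _)
  · exact continuousOn_const.mul (hpow _)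

theorem Iplus_le_rpow_mul {p a b R x t : ℝ} (hR : 1 ≤ R) (hx : 0 ≤ x) (ht : 0 ≤ t) :
    Iplus p a b R x t ≤ (1 + (x + t)) ^ (-(1 + a)) *
      (R * (1 + R) ^ |1 + b| * invWgtOuter a (x + t + R) ^ p + farPart p a b R x t) := by
  set k := (1 + R) ^ |1 + b| * invWgtOuter a (x + t + R) ^ p
  have hnear : Integrable ((Icc ((x + t - R) / 2) ((x + t + R) / 2)).indicator fun _ => k) :=
    (integrableOn_const (by simp)).integrable_indicator measurableSet_Icc
  have hfar := integrable_indicator_farDensity p a b (x := x) (t := t) (R := R) (by linarith)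
  have hmaj : Integrable (iplusMajorant p a b R x t) := (hnear.add hfar).const_mul _
  calc Iplus p a b R x t = ∫ s in Ioc 0 t, iplusIntegrand p a b R x t s :=
        intervalIntegral.integral_of_le ht
    _ ≤ ∫ s in Ioc 0 t, iplusMajorant p a b R x t s :=
        integral_mono_of_nonneg
          (ae_restrict_of_forall_mem measurableSet_Ioc fun s hs => iplusIntegrand_nonneg hR hs.1.le)
          hmaj.integrableOn
          (ae_restrict_of_forall_mem measurableSet_Ioc fun s hs =>
            iplusIntegrand_le_iplusMajorant hR hx ht hs.2)
    _ ≤ ∫ s, iplusMajorant p a b R x t s :=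
        setIntegral_le_integral hmaj (Filter.Eventually.of_forall (iplusMajorant_nonneg hR hx ht))
    _ = (1 + (x + t)) ^ (-(1 + a)) * (R * k + 2⁻¹ * farPart p a b R x t) := by
        simp only [iplusMajorant]
        rw [integral_const_mul, integral_add hnear hfar,
          integral_indicator_const _ measurableSet_Icc,
          Real.volume_real_Icc_of_le (by linarith), integral_indicator measurableSet_Ioc,
          setIntegral_Ioc_comp_mul_add (farDensity p a b (x + t)) two_pos, smul_eq_mul, smul_eq_mul,
          show 2 * ((x + t + R) / 2) + (1 - (x + t)) = 1 + R by ring,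
          show 2 * t + (1 - (x + t)) = 1 + (t - x) by ring,
          show (x + t + R) / 2 - (x + t - R) / 2 = R by ring, farPart]
    _ ≤ _ := by
        have := farPart_nonneg p a b (R := R) hR (by linarith : 0 ≤ x + t)
        refine mul_le_mul_of_nonneg_left ?_ (Real.rpow_nonneg (by linarith) _)
        rw [mul_assoc]
        linarith

theorem inv_wgt_of_le {a R x t : ℝ} (hR : 1 ≤ R) (hx : 0 ≤ x) (ht : 0 ≤ t)
    (h : t - x ≤ R) : (wgt a R x t)⁻¹ = invWgtOuter a (x + t + R) := by
  rw [wgt_of_le (by positivity) (by rwa [abs_of_nonneg hx]), inv_inv, abs_of_nonneg hx,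
    add_comm t x]

theorem rpow_le_inv_wgt_of_lt {a R x t : ℝ} (hR : 1 ≤ R) (hx : 0 ≤ x) (h : R < t - x) :
    (1 + (x + t)) ^ (-(1 + a)) ≤ (wgt a R x t)⁻¹ := by
  rw [wgt_of_lt (by rwa [abs_of_nonneg hx]), abs_of_nonneg hx,
    ← Real.rpow_neg (by split_ifs <;> linarith)]
  split_ifs with ha
  · exact Real.rpow_le_rpow_of_nonpos (by linarith) (by linarith) (by linarith)
  · rw [add_comm x t, add_assoc]

theorem rpow_le_max_invWgtOuter (a : ℝ) {R β : ℝ} (hR : 1 ≤ R) (hβ : 0 ≤ β) :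
    (1 + β) ^ (-(1 + a)) ≤ max 1 (invWgtOuter a (β + R)) := by
  by_cases ha : -1 ≤ a
  · exact (Real.rpow_le_one_of_one_le_of_nonpos (by linarith) (by linarith)).trans
      (le_max_left _ _)
  · refine le_max_of_le_right ?_
    rw [invWgtOuter, if_neg (by linarith), if_neg (by linarith)]
    calc (1 + β) ^ (-(1 + a)) ≤ (β + R) ^ (-(1 + a)) :=
          Real.rpow_le_rpow (by linarith) (by linarith) (by linarith)
      _ ≤ (β + R) ^ (-a) := Real.rpow_le_rpow_of_exponent_le (by linarith) (by linarith)

theorem max_one_mul_rpow_le {n p : ℝ} (hn : 0 ≤ n) (hp : 1 ≤ p) :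
    max 1 n * n ^ p ≤ n * (1 + n ^ p) := by
  have hnp := Real.rpow_nonneg hn p
  rcases le_total n 1 with h | h
  · have hsplit : n ^ p = n ^ (p - 1) * n := by
      rw [← Real.rpow_add_one' hn (by linarith), sub_add_cancel]
    have : n ^ (p - 1) ≤ 1 := Real.rpow_le_one hn h (by linarith)
    rw [max_eq_left h, one_mul, hsplit]
    nlinarith
  · rw [max_eq_right h]
    exact mul_le_mul_of_nonneg_left (by linarith) hn

theorem rpow_mul_invWgtOuter_rpow_le {p a R x t : ℝ} (hp : 1 ≤ p) (hR : 1 ≤ R) (hx : 0 ≤ x)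
    (ht : 0 ≤ t) :
    (1 + (x + t)) ^ (-(1 + a)) * invWgtOuter a (x + t + R) ^ p ≤
      (wgt a R x t)⁻¹ * (1 + invWgtOuter a (x + t + R) ^ p) := by
  have hn := invWgtOuter_nonneg a (y := x + t + R) (by linarith)
  have hnp := Real.rpow_nonneg hn p
  rcases le_or_gt (t - x) R with h | h
  · rw [inv_wgt_of_le hR hx ht h]
    exact (mul_le_mul_of_nonneg_right (rpow_le_max_invWgtOuter a hR (by linarith)) hnp).trans
      (max_one_mul_rpow_le hn hp)
  · exact mul_le_mul (rpow_le_inv_wgt_of_lt hR hx h) (by linarith) hnp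
      (inv_nonneg.2 (wgt_nonneg hR ht))

theorem rpow_mul_farPart_le {p a b R x t : ℝ} (hR : 1 ≤ R) (hx : 0 ≤ x) :
    (1 + (x + t)) ^ (-(1 + a)) * farPart p a b R x t ≤
      (wgt a R x t)⁻¹ * farPart p a b R x t := by
  rcases le_or_gt (t - x) R with h | h
  · simp [farPart, Ioc_eq_empty_of_le (by linarith : 1 + (t - x) ≤ 1 + R)]
  · exact mul_le_mul_of_nonneg_right (rpow_le_inv_wgt_of_lt hR hx h)
      (farPart_nonneg p a b hR (by linarith))

theorem Iplus_le_inv_wgt_mul {p a b R x t : ℝ} (hp : 1 ≤ p) (hR : 1 ≤ R) (hx : 0 ≤ x)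
    (ht : 0 ≤ t) :
    Iplus p a b R x t ≤ (wgt a R x t)⁻¹ *
      (R * (1 + R) ^ |1 + b| * (1 + invWgtOuter a (x + t + R) ^ p) + farPart p a b R x t) := by
  have hc : 0 ≤ R * (1 + R) ^ |1 + b| :=
    mul_nonneg (by linarith) (Real.rpow_nonneg (by linarith) _)
  calc Iplus p a b R x t ≤ _ := Iplus_le_rpow_mul hR hx ht
    _ = R * (1 + R) ^ |1 + b| * ((1 + (x + t)) ^ (-(1 + a)) * invWgtOuter a (x + t + R) ^ p) +
          (1 + (x + t)) ^ (-(1 + a)) * farPart p a b R x t := by ring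
    _ ≤ R * (1 + R) ^ |1 + b| * ((wgt a R x t)⁻¹ * (1 + invWgtOuter a (x + t + R) ^ p)) +
          (wgt a R x t)⁻¹ * farPart p a b R x t :=
        add_le_add (mul_le_mul_of_nonneg_left (rpow_mul_invWgtOuter_rpow_le hp hR hx ht) hc)
          (rpow_mul_farPart_le hR hx)
    _ = _ := by ring

theorem setIntegral_Ioc_rpow_le_log {e A B Q : ℝ} (he : e ≤ -1) (hA : 1 ≤ A) (hBQ : B ≤ Q)
    (hQ : 1 ≤ Q) : ∫ u in Ioc A B, u ^ e ≤ Real.log Q := by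
  rcases le_or_gt B A with hBA | hAB
  · simp [Ioc_eq_empty_of_le hBA, Real.log_nonneg hQ]
  have h0 : (0:ℝ) ∉ uIcc A B := notMem_uIcc_of_lt (by linarith) (by linarith)
  rw [← intervalIntegral.integral_of_le hAB.le]
  calc ∫ u in A..B, u ^ e ≤ ∫ u in A..B, u ^ (-1 : ℝ) :=
        intervalIntegral.integral_mono_on hAB.le
          (intervalIntegral.intervalIntegrable_rpow (Or.inr h0))
          (intervalIntegral.intervalIntegrable_rpow (Or.inr h0))
          fun u hu => Real.rpow_le_rpow_of_exponent_le (by linarith [hu.1]) he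
    _ = Real.log (B / A) := by simp_rw [Real.rpow_neg_one]; exact integral_inv h0
    _ ≤ Real.log Q :=
        Real.log_le_log (div_pos (by linarith) (by linarith))
          ((div_le_self (by linarith) hA).trans hBQ)

theorem setIntegral_Ioc_rpow_le_rpow {e γ A B Q : ℝ} (hγ : 0 < γ) (he : e + 1 ≤ γ)
    (hA : 1 ≤ A) (hBQ : B ≤ Q) (hQ : 0 ≤ Q) : ∫ u in Ioc A B, u ^ e ≤ Q ^ γ / γ := by
  rcases le_or_gt B A with hBA | hAB
  · simp only [Ioc_eq_empty_of_le hBA, Measure.restrict_empty, integral_zero_measure]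
    exact div_nonneg (Real.rpow_nonneg hQ _) hγ.le
  have h0 : (0:ℝ) ∉ uIcc A B := notMem_uIcc_of_lt (by linarith) (by linarith)
  rw [← intervalIntegral.integral_of_le hAB.le]
  calc ∫ u in A..B, u ^ e ≤ ∫ u in A..B, u ^ (γ - 1) :=
        intervalIntegral.integral_mono_on hAB.le
          (intervalIntegral.intervalIntegrable_rpow (Or.inr h0))
          (intervalIntegral.intervalIntegrable_rpow (Or.inr h0))
          fun u hu => Real.rpow_le_rpow_of_exponent_le (by linarith [hu.1]) (by linarith)
    _ = (B ^ γ - A ^ γ) / γ := by rw [integral_rpow (Or.inl (by linarith)), sub_add_cancel]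
    _ ≤ Q ^ γ / γ := by
        have := Real.rpow_nonneg (by linarith : (0:ℝ) ≤ A) γ
        have := Real.rpow_le_rpow (by linarith) hBQ hγ.le
        gcongr
        linarith

theorem setIntegral_Ioc_rpow_le_of_lt_neg_one {e A B : ℝ} (he : e < -1) (hA : 1 ≤ A) :
    ∫ u in Ioc A B, u ^ e ≤ (-(e + 1))⁻¹ := by
  have hpos : 0 < -(e + 1) := by linarith
  rcases le_or_gt B A with hBA | hAB
  · simp only [Ioc_eq_empty_of_le hBA, Measure.restrict_empty, integral_zero_measure]
    positivity
  have h0 : (0:ℝ) ∉ uIcc A B := notMem_uIcc_of_lt (by linarith) (by linarith)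
  have hA' : A ^ (e + 1) ≤ 1 := Real.rpow_le_one_of_one_le_of_nonpos hA (by linarith)
  have hB' : 0 ≤ B ^ (e + 1) := Real.rpow_nonneg (by linarith) _
  rw [← intervalIntegral.integral_of_le hAB.le, integral_rpow (Or.inr ⟨he.ne, h0⟩),
    ← neg_div_neg_eq, neg_sub, inv_eq_one_div]
  gcongr
  linarith

theorem invWgtOuter_rpow_le {p a κ y : ℝ} (hp : 0 < p) (hκ : 0 < κ) (haκ : -(a * p) ≤ κ)
    (hy : 1 ≤ y) : invWgtOuter a y ^ p ≤ (1 + (p / κ) ^ p) * y ^ κ := by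
  have hyκ : 1 ≤ y ^ κ := Real.one_le_rpow hy hκ.le
  have hC : 0 ≤ (p / κ) ^ p := by positivity
  unfold invWgtOuter
  split_ifs
  · rw [Real.one_rpow]
    nlinarith
  · have hlog : Real.log y ≤ y ^ (κ / p) / (κ / p) :=
      Real.log_le_rpow_div (by linarith) (by positivity)
    calc Real.log y ^ p ≤ (y ^ (κ / p) / (κ / p)) ^ p :=
          Real.rpow_le_rpow (Real.log_nonneg hy) hlog hp.le
      _ = (p / κ) ^ p * y ^ κ := by
          rw [Real.div_rpow (by positivity) (by positivity), ← Real.rpow_mul (by linarith),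
            div_mul_cancel₀ _ hp.ne', div_eq_inv_mul, ← Real.inv_rpow (by positivity), inv_div]
      _ ≤ _ := by nlinarith
  · rw [← Real.rpow_mul (by linarith)]
    calc y ^ (-a * p) ≤ y ^ κ := Real.rpow_le_rpow_of_exponent_le hy (by linarith)
      _ ≤ _ := le_mul_of_one_le_left (by linarith) (by linarith)

theorem farPart_of_neg_one_le {p a b R x t : ℝ} (hR : 1 ≤ R) (ha : -1 ≤ a) :
    farPart p a b R x t = ∫ u in Ioc (1 + R) (1 + (t - x)), u ^ (-(1 + (p * (1 + a) + b))) := by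
  refine setIntegral_congr_fun measurableSet_Ioc fun u hu => ?_
  rw [farDensity, if_pos ha, ← Real.rpow_add (by linarith [hu.1])]
  ring_nf

theorem farPart_of_lt_neg_one {p a b R x t : ℝ} (ha : a < -1) :
    farPart p a b R x t =
      (1 + (x + t)) ^ (-(p * (1 + a))) * ∫ u in Ioc (1 + R) (1 + (t - x)), u ^ (-(1 + b)) := by
  simp only [farPart, farDensity, if_neg ha.not_ge, integral_const_mul]

theorem farPart_le_rpow {p a b R κ : ℝ} (hp : 1 < p) (hR : 1 ≤ R) (hκ : 0 < κ)
    (haκ : -(a * p) ≤ κ) (hqκ : -(p * (1 + a) + b) ≤ κ) :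
    ∃ C, 0 ≤ C ∧ ∀ x t Q, 0 ≤ x + t → 1 + (x + t) ≤ 2 * Q → 1 + (t - x) ≤ Q →
      farPart p a b R x t ≤ C * Q ^ κ := by
  by_cases ha : -1 ≤ a
  · refine ⟨κ⁻¹, by positivity, fun x t Q hβ hβQ hδQ => ?_⟩
    rw [farPart_of_neg_one_le hR ha, inv_mul_eq_div]
    exact setIntegral_Ioc_rpow_le_rpow hκ (by linarith) (by linarith) hδQ (by linarith)
  · have hγ : 0 < κ + p * (1 + a) := by nlinarith
    refine ⟨2 ^ (-(p * (1 + a))) * (κ + p * (1 + a))⁻¹, by positivity,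
      fun x t Q hβ hβQ hδQ => ?_⟩
    have hQ : 0 < Q := by linarith
    rw [farPart_of_lt_neg_one (not_le.1 ha)]
    calc (1 + (x + t)) ^ (-(p * (1 + a))) * ∫ u in Ioc (1 + R) (1 + (t - x)), u ^ (-(1 + b))
        ≤ (2 * Q) ^ (-(p * (1 + a))) * (Q ^ (κ + p * (1 + a)) / (κ + p * (1 + a))) :=
          mul_le_mul (Real.rpow_le_rpow (by linarith) hβQ (by nlinarith))
            (setIntegral_Ioc_rpow_le_rpow hγ (by linarith) (by linarith) hδQ hQ.le)
            (setIntegral_nonneg measurableSet_Ioc fun u hu =>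
              Real.rpow_nonneg (by linarith [hu.1]) _)
            (by positivity)
      _ = 2 ^ (-(p * (1 + a))) * (κ + p * (1 + a))⁻¹ * Q ^ κ := by
          rw [Real.mul_rpow (by norm_num) hQ.le, div_eq_mul_inv]
          have : Q ^ (-(p * (1 + a))) * Q ^ (κ + p * (1 + a)) = Q ^ κ := by
            rw [← Real.rpow_add hQ]; ring_nf
          linear_combination (2 ^ (-(p * (1 + a))) * (κ + p * (1 + a))⁻¹) * this

theorem one_le_log_of_three_le {y : ℝ} (hy : 3 ≤ y) : 1 ≤ Real.log y := by
  rw [Real.le_log_iff_exp_le (by linarith)]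
  linarith [Real.exp_one_lt_d9]

def NearFarBound (p a b R : ℝ) (E : ℝ → ℝ) : Prop :=
  ∃ C, 0 < C ∧ ∀ T x t, 0 ≤ x → x ≤ t + R → 0 ≤ t → t ≤ T →
    1 + invWgtOuter a (x + t + R) ^ p ≤ C * E T ∧ farPart p a b R x t ≤ C * E T

theorem nearFarBound_one {p a b R : ℝ} (hR : 1 ≤ R) (ha : 0 < a) (hq : 0 < p * (1 + a) + b) :
    NearFarBound p a b R fun _ => 1 := by
  refine ⟨2 + (p * (1 + a) + b)⁻¹, by positivity, fun T x t hx hxt ht htT => ⟨?_, ?_⟩⟩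
  · rw [invWgtOuter, if_pos ha, Real.one_rpow]
    linarith [inv_pos.2 hq]
  · rw [farPart_of_neg_one_le hR (by linarith)]
    have := setIntegral_Ioc_rpow_le_of_lt_neg_one (e := -(1 + (p * (1 + a) + b)))
      (A := 1 + R) (B := 1 + (t - x)) (by linarith) (by linarith)
    rw [show -(-(1 + (p * (1 + a) + b)) + 1) = p * (1 + a) + b by ring] at this
    linarith

theorem nearFarBound_log_rpow {p b R : ℝ} (hp : 1 < p) (hR : 1 ≤ R) (hb : -p ≤ b) :
    NearFarBound p 0 b R fun T => Real.log (T + 3 * R) ^ p := by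
  refine ⟨1 + 2 ^ p, by positivity, fun T x t hx hxt ht htT => ?_⟩
  have hℓ : 1 ≤ Real.log (T + 3 * R) := one_le_log_of_three_le (by linarith)
  have hℓp : Real.log (T + 3 * R) ≤ Real.log (T + 3 * R) ^ p := by
    simpa using Real.rpow_le_rpow_of_exponent_le hℓ hp.le
  have h2 : 0 ≤ 2 ^ p * Real.log (T + 3 * R) ^ p := by positivity
  constructor
  · have hlog : Real.log (x + t + R) ≤ 2 * Real.log (T + 3 * R) := by
      calc Real.log (x + t + R) ≤ Real.log ((T + 3 * R) ^ 2) :=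
            Real.log_le_log (by linarith) (by nlinarith)
        _ = 2 * Real.log (T + 3 * R) := by rw [Real.log_pow]; norm_num
    have : Real.log (x + t + R) ^ p ≤ 2 ^ p * Real.log (T + 3 * R) ^ p := by
      rw [← Real.mul_rpow (by norm_num) (by linarith)]
      exact Real.rpow_le_rpow (Real.log_nonneg (by linarith)) hlog (by linarith)
    rw [invWgtOuter, if_neg (lt_irrefl 0), if_pos rfl]
    linarith
  · rw [farPart_of_neg_one_le hR (by norm_num)]
    have := setIntegral_Ioc_rpow_le_log (e := -(1 + (p * (1 + 0) + b))) (A := 1 + R)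
      (B := 1 + (t - x)) (Q := T + 3 * R) (by linarith) (by linarith) (by linarith) (by linarith)
    linarith

theorem nearFarBound_log {p a b R : ℝ} (hR : 1 ≤ R) (ha : 0 < a) (hq : p * (1 + a) + b = 0) :
    NearFarBound p a b R fun T => Real.log (T + 3 * R) := by
  refine ⟨2, two_pos, fun T x t hx hxt ht htT => ?_⟩
  have hℓ : 1 ≤ Real.log (T + 3 * R) := one_le_log_of_three_le (by linarith)
  constructor
  · rw [invWgtOuter, if_pos ha, Real.one_rpow]
    linarith
  · rw [farPart_of_neg_one_le hR (by linarith)]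
    have := setIntegral_Ioc_rpow_le_log (e := -(1 + (p * (1 + a) + b))) (A := 1 + R)
      (B := 1 + (t - x)) (Q := T + 3 * R) (by linarith) (by linarith) (by linarith) (by linarith)
    linarith

theorem nearFarBound_rpow {p a b R κ : ℝ} (hp : 1 < p) (hR : 1 ≤ R) (hκ : 0 < κ)
    (haκ : -(a * p) ≤ κ) (hqκ : -(p * (1 + a) + b) ≤ κ) :
    NearFarBound p a b R fun T => (T + 2 * R) ^ κ := by
  obtain ⟨C, hC, hfar⟩ := farPart_le_rpow hp hR hκ haκ hqκ
  refine ⟨1 + (1 + (p / κ) ^ p) * 2 ^ κ + C, by positivity,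
    fun T x t hx hxt ht htT => ?_⟩
  have hQ : 1 ≤ (T + 2 * R) ^ κ := Real.one_le_rpow (by linarith) hκ.le
  constructor
  · have hy : (x + t + R) ^ κ ≤ 2 ^ κ * (T + 2 * R) ^ κ := by
      rw [← Real.mul_rpow (by norm_num) (by linarith)]
      exact Real.rpow_le_rpow (by linarith) (by linarith) hκ.le
    have hK := invWgtOuter_rpow_le (zero_lt_one.trans hp) hκ haκ (y := x + t + R) (by linarith)
    have hK' := mul_le_mul_of_nonneg_left hy (by positivity : 0 ≤ 1 + (p / κ) ^ p)
    have : 0 ≤ C * (T + 2 * R) ^ κ := by positivity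
    linarith
  · have := hfar x t (T + 2 * R) (by linarith) (by linarith) (by linarith)
    have : 0 ≤ (1 + (p / κ) ^ p) * 2 ^ κ * (T + 2 * R) ^ κ := by positivity
    linarith

theorem nearFarBound_Eab {p a b R : ℝ} (hp : 1 < p) (hR : 1 ≤ R) (hreg : Regime p a b) :
    NearFarBound p a b R (Eab p a b R) := by
  rcases hreg with ⟨ha, hq⟩ | ⟨rfl, hb⟩ | ⟨ha, hq⟩ | ⟨ha, hb⟩ | ⟨hq, hb⟩
  · convert nearFarBound_one hR ha hq using 1
    funext T
    simp [Eab, ha, hq]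
  · convert nearFarBound_log_rpow hp hR hb using 1
    funext T
    simp [Eab, hb]
  · convert nearFarBound_log hR ha hq using 1
    funext T
    simp [Eab, ha.ne', ha.not_ge, hq]
  · convert nearFarBound_rpow (a := a) (b := b) (κ := -(a * p)) hp hR (by nlinarith) le_rfl
      (by linarith) using 1
    funext T
    simp [Eab, ha, ha.not_gt, ha.ne, hb]
  · convert nearFarBound_rpow (a := a) (b := b) (κ := -(p * (1 + a)) - b) hp hR (by linarith)
      (by linarith) (by linarith) using 1
    funext T
    simp [Eab, hq.not_gt, hq.ne, hb.not_ge]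

theorem Iplus_estimate (p a b R : ℝ) (hp : 1 < p) (hR : 1 ≤ R)
    (hreg : Regime p a b) :
    ∃ C : ℝ, 0 < C ∧ ∀ T : ℝ, 0 < T → ∀ x t : ℝ,
      0 ≤ x → x ≤ t + R → 0 ≤ t → t ≤ T →
      Iplus p a b R x t ≤ C * Eab p a b R T * (wgt a R x t)⁻¹ := by
  obtain ⟨C, hC, hbound⟩ := nearFarBound_Eab hp hR hreg
  have hc : 0 < R * (1 + R) ^ |1 + b| :=
    mul_pos (by linarith) (Real.rpow_pos_of_pos (by linarith) _)
  refine ⟨(R * (1 + R) ^ |1 + b| + 1) * C, by positivity, fun T _ x t hx hxt ht htT => ?_⟩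
  obtain ⟨hnear, hfar⟩ := hbound T x t hx hxt ht htT
  calc Iplus p a b R x t
      ≤ (wgt a R x t)⁻¹ * (R * (1 + R) ^ |1 + b| * (1 + invWgtOuter a (x + t + R) ^ p) +
          farPart p a b R x t) := Iplus_le_inv_wgt_mul hp.le hR hx ht
    _ ≤ (wgt a R x t)⁻¹ * (R * (1 + R) ^ |1 + b| * (C * Eab p a b R T) + C * Eab p a b R T) :=
        mul_le_mul_of_nonneg_left (by gcongr) (inv_nonneg.2 (wgt_nonneg hR ht))
    _ = _ := by ring
end
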